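/- Let Ω ⊂ C be a bounded domain, let h be continuous on the closure of the partial Schottky double Ω̂ = Ω ∪ Γ ∪ Ω̃ (Γ ⊂ ∂Ω an arc, Ω̃ the reflected copy with z ↔ z̃), harmonic on Ω ∪ Ω̃. Write h_e(z) = (h(z)+h(z̃))/2 and h_o(z) = (h(z)−h(z̃))/2. Suppose μ is a positive measure compactly supported in Ω such that ∫_Ω g dλ = ∫ g dμ for every g continuous on cl(Ω), harmonic on Ω, vanishing on Γ. Then ∫_Ω h dλ − ∫_{Ω̃} h dλ = ∫ h dμ − ∫ h dμ̃, where μ̃ is the reflection of μ. -/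

import Mathlib

/-!
The even part `h(z) + h(z̄)` contributes equally to both sides, so only the odd part
`g(z) = h(z) - h(z̄)` matters. It is harmonic on `Ω` because the Laplacian is invariant under
the isometry `z ↦ z̄`, and it vanishes on `Γ ⊆ ℝ`, so the one-phase quadrature identity applies
to it; the change of variables `z ↦ z̄` turns `∫_Ω h(z̄)` into `∫_{Ω̃} h`.
-/

open MeasureTheory Set Complex
noncomputable section

/-- The Wirtinger derivative ∂̄f = (∂f/∂x + i ∂f/∂y)/2 of a function f : ℂ → ℂ. -/
def dbar (f : ℂ → ℂ) (z : ℂ) : ℂ :=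
  (fderiv ℝ f z 1 + Complex.I * fderiv ℝ f z Complex.I) / 2

/-- The Wirtinger derivative ∂f = (∂f/∂x − i ∂f/∂y)/2 of a function f : ℂ → ℂ. -/
def dz (f : ℂ → ℂ) (z : ℂ) : ℂ :=
  (fderiv ℝ f z 1 - Complex.I * fderiv ℝ f z Complex.I) / 2

/-- The Wirtinger derivative ∂u for a real-valued u : ℂ → ℝ. -/
def dzR (u : ℂ → ℝ) (z : ℂ) : ℂ :=
  ((fderiv ℝ u z 1 : ℝ) - Complex.I * (fderiv ℝ u z Complex.I : ℝ)) / 2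

/-- A set has piecewise C¹ boundary if its frontier is a finite union of C¹ curves. -/
def PiecewiseC1Boundary (D : Set ℂ) : Prop :=
  ∃ (m : ℕ) (γ : Fin m → ℝ → ℂ), (∀ i, ContDiffOn ℝ 1 (γ i) (Set.Icc 0 1)) ∧
    frontier D = ⋃ i, γ i '' Set.Icc (0:ℝ) 1

/-- Definition 4.1: a two-phase Schwarz function for the pair (D₊, D₋) with weights β₊, β₋. -/
def TwoPhaseSchwarz (bp bm : ℝ) (Dp Dm : Set ℂ) (Sp Sm : ℂ → ℂ) : Prop :=
  ∃ Cp Cm : Set ℂ, IsCompact Cp ∧ Cp ⊆ Dp ∧ IsCompact Cm ∧ Cm ⊆ Dm ∧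
    ContinuousOn Sp (closure Dp) ∧ ContinuousOn Sm (closure Dm) ∧
    DifferentiableOn ℂ Sp (Dp \ Cp) ∧ DifferentiableOn ℂ Sm (Dm \ Cm) ∧
    (∀ z ∈ frontier Dp \ (frontier Dp ∩ frontier Dm), Sp z = (bp : ℂ) * (starRingEnd ℂ) z) ∧
    (∀ z ∈ frontier Dm \ (frontier Dp ∩ frontier Dm), Sm z = -(bm : ℂ) * (starRingEnd ℂ) z) ∧
    (∀ z ∈ frontier Dp ∩ frontier Dm, Sp z - Sm z = ((bp : ℂ) + (bm : ℂ)) * (starRingEnd ℂ) z)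

/-- The logarithmic potential kernel, normalized so that −Δ Uμ = μ. -/
def logKernel (z w : ℂ) : ℝ := -Real.log ‖z - w‖ / (2 * Real.pi)

/-- The Laplacian of a function u : ℂ → ℝ. -/
def lapC (u : ℂ → ℝ) (z : ℂ) : ℝ :=
  fderiv ℝ (fun v => fderiv ℝ u v 1) z 1 +
    fderiv ℝ (fun v => fderiv ℝ u v Complex.I) z Complex.I

/-- Harmonicity of u : ℂ → ℝ on an open set. -/
def HarmonicOnC (u : ℂ → ℝ) (U : Set ℂ) : Prop :=
  ContDiffOn ℝ 2 u U ∧ ∀ z ∈ U, lapC u z = 0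

open InnerProductSpace Laplacian Filter

section LinearIsometryEquiv

variable {E E' F : Type*} [NormedAddCommGroup E] [InnerProductSpace ℝ E] [FiniteDimensional ℝ E]
  [NormedAddCommGroup E'] [InnerProductSpace ℝ E'] [FiniteDimensional ℝ E']
  [NormedAddCommGroup F] [NormedSpace ℝ F]

theorem laplacian_comp_linearIsometryEquiv (g : E ≃ₗᵢ[ℝ] E') (f : E' → F) (x : E) :
    Δ (f ∘ g) x = Δ f (g x) := by
  let b := stdOrthonormalBasis ℝ E
  rw [laplacian_eq_iteratedFDeriv_orthonormalBasis _ b,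
    laplacian_eq_iteratedFDeriv_orthonormalBasis _ (b.map g)]
  have hcomp : iteratedFDeriv ℝ 2 (f ∘ g) x
      = (iteratedFDeriv ℝ 2 f (g x)).compContinuousLinearMap fun _ => (g : E →L[ℝ] E') := by
    have := g.toContinuousLinearEquiv.iteratedFDerivWithin_comp_right f uniqueDiffOn_univ
      (mem_univ (g x)) 2
    rwa [preimage_univ, iteratedFDerivWithin_univ, iteratedFDerivWithin_univ] at this
  refine Finset.sum_congr rfl fun i _ => ?_
  rw [hcomp, ContinuousMultilinearMap.compContinuousLinearMap_apply]
  congr 1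
  ext j
  fin_cases j <;> rfl

theorem HarmonicAt.comp_linearIsometryEquiv {f : E' → F} {x : E} (g : E ≃ₗᵢ[ℝ] E')
    (hf : HarmonicAt f (g x)) : HarmonicAt (f ∘ g) x := by
  refine ⟨hf.1.comp x g.contDiff.contDiffAt, ?_⟩
  filter_upwards [g.continuous.continuousAt.eventually hf.2] with y hy
  rw [laplacian_comp_linearIsometryEquiv, hy, Pi.zero_apply, Pi.zero_apply]

theorem HarmonicOnNhd.comp_linearIsometryEquiv {f : E' → F} {s : Set E'} (g : E ≃ₗᵢ[ℝ] E')
    (hf : HarmonicOnNhd f s) : HarmonicOnNhd (f ∘ g) (g ⁻¹' s) :=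
  fun x hx => HarmonicAt.comp_linearIsometryEquiv g (hf (g x) hx)

end LinearIsometryEquiv

theorem lapC_eq_laplacian {u : ℂ → ℝ} {z : ℂ} (hu : ContDiffAt ℝ 2 u z) : lapC u z = Δ u z := by
  have hd : DifferentiableAt ℝ (fderiv ℝ u) z :=
    (hu.fderiv_right (by norm_num)).differentiableAt one_ne_zero
  simp [lapC, laplacian_eq_iteratedFDeriv_complexPlane, iteratedFDeriv_two_apply,
    fderiv_clm_apply hd (differentiableAt_const _)]

theorem harmonicOnC_iff_harmonicOnNhd {u : ℂ → ℝ} {U : Set ℂ} (hU : IsOpen U) :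
    HarmonicOnC u U ↔ HarmonicOnNhd u U := by
  refine ⟨fun ⟨hsmooth, hlap⟩ z hz => ⟨hsmooth.contDiffAt (hU.mem_nhds hz), ?_⟩,
    fun hu => ⟨hu.contDiffOn, fun z hz => ?_⟩⟩
  · filter_upwards [hU.mem_nhds hz] with w hw
    rw [← lapC_eq_laplacian (hsmooth.contDiffAt (hU.mem_nhds hw)), hlap w hw, Pi.zero_apply]
  · rw [lapC_eq_laplacian (hu z hz).1]
    exact (hu z hz).2.self_of_nhds

open ComplexConjugate

theorem setIntegral_conj_image {E : Type*} [NormedAddCommGroup E] [NormedSpace ℝ E]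
    (f : ℂ → E) (s : Set ℂ) :
    ∫ z in conj '' s, f z = ∫ z in s, f (conj z) :=
  conjLIE.measurePreserving.setIntegral_image_emb conjLIE.toHomeomorph.measurableEmbedding f s

theorem integrableOn_conj_image_iff {E : Type*} [NormedAddCommGroup E] {f : ℂ → E} {s : Set ℂ} :
    IntegrableOn f (conj '' s) ↔ IntegrableOn (fun z => f (conj z)) s :=
  ((conjLIE.measurePreserving.restrict_image_emb conjLIE.toHomeomorph.measurableEmbedding
    s).integrable_comp_emb conjLIE.toHomeomorph.measurableEmbedding).symm

theorem statement_14_general (Ω : Set ℂ) (hΩo : IsOpen Ω)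
    (Γ : Set ℂ) (hΓ : Γ ⊆ frontier Ω ∩ {z : ℂ | z.im = 0})
    (h : ℂ → ℝ)
    (hhc : ContinuousOn h (closure (Ω ∪ Γ ∪ (starRingEnd ℂ) '' Ω)))
    (hhh : HarmonicOnC h (Ω ∪ (starRingEnd ℂ) '' Ω))
    (μ : Measure ℂ)
    (hquad : ∀ g : ℂ → ℝ, ContinuousOn g (closure Ω) → HarmonicOnC g Ω →
      (∀ z ∈ Γ, g z = 0) → IntegrableOn g Ω volume → Integrable g μ →
      ∫ z in Ω, g z = ∫ z, g z ∂μ)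
    (hint1 : IntegrableOn h Ω volume)
    (hint2 : IntegrableOn h ((starRingEnd ℂ) '' Ω) volume)
    (hint3 : Integrable h μ) (hint4 : Integrable (fun z => h ((starRingEnd ℂ) z)) μ) :
    (∫ z in Ω, h z) - ∫ z in (starRingEnd ℂ) '' Ω, h z
      = (∫ z, h z ∂μ) - ∫ z, h ((starRingEnd ℂ) z) ∂μ := by
  have hmaps_conj : MapsTo conj Ω (Ω ∪ conj '' Ω) := fun z hz => .inr (mem_image_of_mem _ hz)
  have hU : IsOpen (Ω ∪ conj '' Ω) := hΩo.union (conjLIE.toHomeomorph.isOpenMap _ hΩo)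
  have hharm : HarmonicOnNhd h (Ω ∪ conj '' Ω) := (harmonicOnC_iff_harmonicOnNhd hU).1 hhh
  have hodd_harm : HarmonicOnC (fun z => h z - h (conj z)) Ω :=
    (harmonicOnC_iff_harmonicOnNhd hΩo).2 <| (hharm.mono subset_union_left).sub
      ((HarmonicOnNhd.comp_linearIsometryEquiv conjLIE hharm).mono hmaps_conj)
  have hodd_cont : ContinuousOn (fun z => h z - h (conj z)) (closure Ω) :=
    (hhc.mono (closure_mono fun z hz => .inl (.inl hz))).sub <|
      hhc.comp continuous_conj.continuousOn fun z hz =>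
        map_mem_closure continuous_conj hz fun w hw => .inr (mem_image_of_mem _ hw)
  have hodd_Γ : ∀ z ∈ Γ, h z - h (conj z) = 0 := fun z hz => by
    rw [conj_eq_iff_im.2 (hΓ hz).2, sub_self]
  have hint_conj := integrableOn_conj_image_iff.1 hint2
  have hq := hquad _ hodd_cont hodd_harm hodd_Γ (hint1.sub hint_conj) (hint3.sub hint4)
  rwa [integral_sub hint1 hint_conj, integral_sub hint3 hint4, ← setIntegral_conj_image] at hq

/-- Two-phase quadrature identity via the Schottky double (modelled by reflection in ℝ):
if Ω is a one-phase quadrature domain for harmonic functions vanishing on the arc Γ ⊆ ∂Ω ∩ ℝ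
with respect to μ, then (Ω, Ω̃) with Ω̃ = conj(Ω) satisfies the two-phase quadrature identity
with respect to (μ, μ̃) for all h harmonic on Ω ∪ Ω̃ and continuous up to the closure. -/
theorem statement_14 (Ω : Set ℂ) (hΩo : IsOpen Ω) (hΩc : IsConnected Ω)
    (hΩb : Bornology.IsBounded Ω) (hΩup : Ω ⊆ {z : ℂ | 0 < z.im})
    (Γ : Set ℂ) (hΓ : Γ ⊆ frontier Ω ∩ {z : ℂ | z.im = 0})
    (h : ℂ → ℝ)
    (hhc : ContinuousOn h (closure (Ω ∪ Γ ∪ (starRingEnd ℂ) '' Ω)))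
    (hhh : HarmonicOnC h (Ω ∪ (starRingEnd ℂ) '' Ω))
    (μ : Measure ℂ) (hμ : IsFiniteMeasure μ)
    (C : Set ℂ) (hC : IsCompact C) (hCΩ : C ⊆ Ω) (hμs : μ Cᶜ = 0)
    (hquad : ∀ g : ℂ → ℝ, ContinuousOn g (closure Ω) → HarmonicOnC g Ω →
      (∀ z ∈ Γ, g z = 0) → IntegrableOn g Ω volume → Integrable g μ →
      ∫ z in Ω, g z = ∫ z, g z ∂μ)
    (hint1 : IntegrableOn h Ω volume)
    (hint2 : IntegrableOn h ((starRingEnd ℂ) '' Ω) volume)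
    (hint3 : Integrable h μ) (hint4 : Integrable (fun z => h ((starRingEnd ℂ) z)) μ) :
    (∫ z in Ω, h z) - ∫ z in (starRingEnd ℂ) '' Ω, h z
      = (∫ z, h z ∂μ) - ∫ z, h ((starRingEnd ℂ) z) ∂μ :=
  statement_14_general Ω hΩo Γ hΓ h hhc hhh μ hquad hint1 hint2 hint3 hint4
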